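/- The function ψ(θ) = π − θ on [0, π] defines a positive semi-definite kernel on the unit sphere S^{p-1} for every p ≥ 1: for any points z_1,…,z_m ∈ S^{p-1} and any c ∈ ℝ^m, Σ_{k,ℓ} c_k c_ℓ ψ(arccos(⟨z_k, z_ℓ⟩)) ≥ 0. -/

import Mathlib

open Real

/-!
If `u` is a standard Gaussian vector, then for unit vectors `z`, `w` the probability that both
`⟪z, u⟫` and `⟪w, u⟫` are positive is `(π - arccos ⟪z, w⟫) / (2π)`: project `u` onto the plane
spanned by `z` and `w`, where it is a standard planar Gaussian, and use its rotation invariance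
(polar coordinates). Hence `π - arccos ⟪z_k, z_l⟫` is `2π` times the Gram matrix of the
indicators of the half-spaces `{0 < ⟪z_k, u⟫}` in `L²` of the Gaussian measure, and Gram matrices
are positive semi-definite. The points are first moved to `ℝ^{p+1}` so that such a plane exists.
-/

open MeasureTheory ProbabilityTheory Set
open scoped RealInnerProductSpace

lemma integral_Ioi_mul_exp_neg_sq_div_two : ∫ r in Ioi (0 : ℝ), r * exp (-(r ^ 2) / 2) = 1 := by
  have h := integral_mul_cexp_neg_mul_sq (b := 1 / 2) (by norm_num)
  norm_num at h
  apply Complex.ofReal_injective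
  rw [← integral_complex_ofReal, Complex.ofReal_one, ← h]
  congr 1 with r
  rw [Complex.ofReal_mul, Complex.ofReal_exp]
  congr 2
  push_cast
  ring

lemma cos_pos_and_cos_sub_pos_iff {α θ : ℝ} (hα₀ : 0 ≤ α) (hαπ : α ≤ π) (hθ : θ ∈ Ioo (-π) π) :
    0 < cos θ ∧ 0 < cos (θ - α) ↔ θ ∈ Ioo (α - π / 2) (π / 2) := by
  obtain ⟨hθ₁, hθ₂⟩ := hθ
  constructor
  · rintro ⟨h₁, h₂⟩
    by_contra! hc
    rw [mem_Ioo, not_and_or, not_lt, not_lt] at hc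
    rcases hc with hc | hc
    · rcases le_or_gt θ (-(π / 2)) with h | h
      · have := cos_nonpos_of_pi_div_two_le_of_le (x := -θ) (by linarith) (by linarith)
        rw [cos_neg] at this
        linarith
      · have := cos_nonpos_of_pi_div_two_le_of_le (x := α - θ) (by linarith) (by linarith)
        rw [← cos_neg, neg_sub] at this
        linarith
    · have := cos_nonpos_of_pi_div_two_le_of_le hc (by linarith)
      linarith
  · rintro ⟨h₁, h₂⟩
    exact ⟨cos_pos_of_mem_Ioo ⟨by linarith, h₂⟩, cos_pos_of_mem_Ioo ⟨by linarith, by linarith⟩⟩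

/-- The points making an acute angle with both `(1, 0)` and `(cos α, sin α)`: for `0 ≤ α ≤ π`,
an open sector of opening `π - α`. -/
def wedge (α : ℝ) : Set (ℝ × ℝ) := {v | 0 < v.1 ∧ 0 < cos α * v.1 + sin α * v.2}

lemma measurableSet_wedge (α : ℝ) : MeasurableSet (wedge α) :=
  (measurableSet_lt measurable_const measurable_fst).inter
    (measurableSet_lt measurable_const (f := fun _ ↦ 0)
      (by fun_prop : Measurable fun v : ℝ × ℝ ↦ cos α * v.1 + sin α * v.2))

lemma integral_wedge_exp_neg_sq_div_two {α : ℝ} (hα₀ : 0 ≤ α) (hαπ : α ≤ π) :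
    ∫ v in wedge α, exp (-(v.1 ^ 2 + v.2 ^ 2) / 2) = π - α := by
  have hpolar : ∀ p ∈ polarCoord.target,
      p.1 • (wedge α).indicator (fun v ↦ exp (-(v.1 ^ 2 + v.2 ^ 2) / 2)) (polarCoord.symm p) =
        p.1 * exp (-(p.1 ^ 2) / 2) * (Ioo (α - π / 2) (π / 2)).indicator 1 p.2 := by
    rintro ⟨r, θ⟩ ⟨hr, hθ⟩
    have hmem : (r * cos θ, r * sin θ) ∈ wedge α ↔ θ ∈ Ioo (α - π / 2) (π / 2) := by
      have hr : 0 < r := hr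
      simp only [wedge, mem_ofPred_eq]
      rw [show cos α * (r * cos θ) + sin α * (r * sin θ) = r * (cos θ * cos α + sin θ * sin α) by
        ring, mul_pos_iff_of_pos_left hr, mul_pos_iff_of_pos_left hr, ← cos_sub,
        cos_pos_and_cos_sub_pos_iff hα₀ hαπ hθ]
    have hnorm : (r * cos θ) ^ 2 + (r * sin θ) ^ 2 = r ^ 2 := by
      rw [mul_pow, mul_pow, ← mul_add, cos_sq_add_sin_sq, mul_one]
    simp only [polarCoord_symm_apply, smul_eq_mul]
    by_cases hθW : θ ∈ Ioo (α - π / 2) (π / 2)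
    · rw [indicator_of_mem (hmem.2 hθW), indicator_of_mem hθW, hnorm, Pi.one_apply, mul_one]
    · rw [indicator_of_notMem (mt hmem.1 hθW), indicator_of_notMem hθW, mul_zero, mul_zero]
  rw [← integral_indicator (measurableSet_wedge α), ← integral_comp_polarCoord_symm,
    setIntegral_congr_fun polarCoord.open_target.measurableSet hpolar, polarCoord_target,
    Measure.volume_eq_prod, setIntegral_prod_mul (fun r ↦ r * exp (-(r ^ 2) / 2))
      ((Ioo (α - π / 2) (π / 2)).indicator 1), integral_Ioi_mul_exp_neg_sq_div_two, one_mul,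
    integral_indicator_one measurableSet_Ioo, measureReal_restrict_apply measurableSet_Ioo,
    inter_eq_left.2, volume_real_Ioo_of_le]
  · ring
  · linarith
  · exact Ioo_subset_Ioo (by linarith [pi_pos]) (by linarith [pi_pos])

lemma gaussianReal_prod_eq_withDensity :
    (gaussianReal 0 1).prod (gaussianReal 0 1) =
      volume.withDensity (fun v : ℝ × ℝ ↦ gaussianPDF 0 1 v.1 * gaussianPDF 0 1 v.2) := by
  rw [gaussianReal_of_var_ne_zero _ one_ne_zero, prod_withDensity (measurable_gaussianPDF _ _)
    (measurable_gaussianPDF _ _), Measure.volume_eq_prod]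

lemma gaussianPDFReal_mul_gaussianPDFReal (a b : ℝ) :
    gaussianPDFReal 0 1 a * gaussianPDFReal 0 1 b = (2 * π)⁻¹ * exp (-(a ^ 2 + b ^ 2) / 2) := by
  simp only [gaussianPDFReal, NNReal.coe_one, mul_one, sub_zero]
  rw [mul_mul_mul_comm, ← exp_add, ← mul_inv, mul_self_sqrt (by positivity)]
  congr 2
  ring

lemma measureReal_gaussianReal_prod {s : Set (ℝ × ℝ)} (hs : MeasurableSet s) :
    ((gaussianReal 0 1).prod (gaussianReal 0 1)).real s =
      (2 * π)⁻¹ * ∫ v in s, exp (-(v.1 ^ 2 + v.2 ^ 2) / 2) := by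
  rw [← integral_indicator_one hs, gaussianReal_prod_eq_withDensity,
    integral_withDensity_eq_integral_toReal_smul (by fun_prop)
      (ae_of_all _ fun _ ↦ ENNReal.mul_lt_top gaussianPDF_lt_top gaussianPDF_lt_top),
    ← integral_const_mul, ← integral_indicator hs]
  congr 1 with v
  rw [ENNReal.toReal_mul, toReal_gaussianPDF, toReal_gaussianPDF,
    gaussianPDFReal_mul_gaussianPDFReal, smul_eq_mul]
  by_cases hv : v ∈ s <;> simp [hv]

lemma measureReal_gaussianReal_prod_wedge {α : ℝ} (hα₀ : 0 ≤ α) (hαπ : α ≤ π) :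
    ((gaussianReal 0 1).prod (gaussianReal 0 1)).real (wedge α) = (π - α) / (2 * π) := by
  rw [measureReal_gaussianReal_prod (measurableSet_wedge α),
    integral_wedge_exp_neg_sq_div_two hα₀ hαπ]
  ring

lemma MeasureTheory.Measure.map_pi_pair {ι : Type*} [Fintype ι] {Ω : ι → Type*}
    [∀ i, MeasurableSpace (Ω i)] (μ : ∀ i, Measure (Ω i)) [∀ i, IsProbabilityMeasure (μ i)] {i j : ι} (hij : i ≠ j) :
    (Measure.pi μ).map (fun x ↦ (x i, x j)) = (μ i).prod (μ j) := by
  have hind := (iIndepFun_pi (X := fun _ ↦ id) (μ := μ) fun _ ↦ aemeasurable_id).indepFun hij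
  rw [← (measurePreserving_eval μ i).map_eq, ← (measurePreserving_eval μ j).map_eq]
  exact (indepFun_iff_map_prod_eq_prod_map_map (measurable_pi_apply i).aemeasurable
    (measurable_pi_apply j).aemeasurable).1 hind

lemma sum_sum_mul_inner_nonneg {ι F : Type*} [Fintype ι] [NormedAddCommGroup F]
    [InnerProductSpace ℝ F] (f : ι → F) (c : ι → ℝ) :
    0 ≤ ∑ k, ∑ l, c k * c l * ⟪f k, f l⟫ := by
  have h : ∑ k, ∑ l, c k * c l * ⟪f k, f l⟫ = ⟪∑ k, c k • f k, ∑ l, c l • f l⟫ := by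
    rw [sum_inner]
    simp only [inner_sum, real_inner_smul_left, real_inner_smul_right]
    exact Finset.sum_congr rfl fun k _ ↦ Finset.sum_congr rfl fun l _ ↦ by ring
  rw [h]
  exact real_inner_self_nonneg

section InnerProductSpace

variable {E : Type*} [NormedAddCommGroup E] [InnerProductSpace ℝ E] [FiniteDimensional ℝ E]

lemma exists_norm_eq_one_inner_eq_zero (hE : 2 ≤ Module.finrank ℝ E) (z : E) :
    ∃ e : E, ‖e‖ = 1 ∧ ⟪z, e⟫ = 0 := by
  have hK : 0 < Module.finrank ℝ (ℝ ∙ z)ᗮ := by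
    have := (ℝ ∙ z).finrank_add_finrank_orthogonal
    have : Module.finrank ℝ (ℝ ∙ z) ≤ 1 := (finrank_span_le_card ({z} : Set E)).trans (by simp)
    omega
  obtain ⟨x, hx, hx0⟩ := Submodule.exists_mem_ne_zero_of_ne_bot (Submodule.one_le_finrank_iff.1 hK)
  refine ⟨‖x‖⁻¹ • x, norm_smul_inv_norm hx0, ?_⟩
  rw [real_inner_smul_right, Submodule.mem_orthogonal_singleton_iff_inner_right.1 hx, mul_zero]

lemma exists_orthonormal_eq_cos_smul_add_sin_smul (hE : 2 ≤ Module.finrank ℝ E) {z w : E}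
    (hz : ‖z‖ = 1) (hw : ‖w‖ = 1) :
    ∃ e : E, Orthonormal ℝ ![z, e] ∧
      w = cos (arccos ⟪z, w⟫) • z + sin (arccos ⟪z, w⟫) • e := by
  set ρ := ⟪z, w⟫
  have hρ : |ρ| ≤ 1 := by simpa [hz, hw] using abs_real_inner_le_norm z w
  rw [cos_arccos (neg_le_of_abs_le hρ) (le_of_abs_le hρ), sin_arccos]
  set v := w - ρ • z
  have hzv : ⟪z, v⟫ = 0 := by simp [v, ρ, inner_sub_right, real_inner_smul_right, hz]
  have hv : ‖v‖ = √(1 - ρ ^ 2) := by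
    have hwz : ⟪w, z⟫ = ρ := real_inner_comm z w
    rw [← sqrt_sq (norm_nonneg v), norm_sub_sq_real, norm_smul, real_inner_smul_right, hwz, hz, hw,
      norm_eq_abs, mul_one, sq_abs]
    congr 1
    ring
  obtain ⟨e, he, hze, hve⟩ : ∃ e : E, ‖e‖ = 1 ∧ ⟪z, e⟫ = 0 ∧ v = ‖v‖ • e := by
    rcases eq_or_ne v 0 with h | h
    · obtain ⟨e, he, hze⟩ := exists_norm_eq_one_inner_eq_zero hE z
      exact ⟨e, he, hze, by simp [h]⟩
    · refine ⟨‖v‖⁻¹ • v, norm_smul_inv_norm h, by rw [real_inner_smul_right, hzv, mul_zero], ?_⟩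
      rw [smul_smul, mul_inv_cancel₀ (norm_ne_zero_iff.2 h), one_smul]
  refine ⟨e, ?_, ?_⟩
  · exact orthonormal_vecCons_iff.2 ⟨hz, Fin.forall_fin_one.2 hze,
      orthonormal_vecCons_iff.2 ⟨he, finZeroElim, finZeroElim, fun i ↦ i.elim0⟩⟩
  · rw [← hv, ← hve, add_sub_cancel]

variable [MeasurableSpace E] [BorelSpace E]

lemma stdGaussian_map_inner_prod {x y : E} (hxy : Orthonormal ℝ ![x, y]) :
    (stdGaussian E).map (fun u ↦ (⟪x, u⟫, ⟪y, u⟫)) =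
      (gaussianReal 0 1).prod (gaussianReal 0 1) := by
  obtain ⟨s, b, hs, hb⟩ := hxy.toSubtypeRange.exists_orthonormalBasis_extension
  let i : s := ⟨x, hs ⟨0, rfl⟩⟩
  let j : s := ⟨y, hs ⟨1, rfl⟩⟩
  have hxy' : x ≠ y := by simpa using hxy.linearIndependent.injective.ne (zero_ne_one (α := Fin 2))
  have hbi : b i = x := congrFun hb i
  have hbj : b j = y := congrFun hb j
  rw [stdGaussian_eq_map_pi_orthonormalBasis b, Measure.map_map (by fun_prop) (by fun_prop),
    ← Measure.map_pi_pair (fun _ ↦ gaussianReal 0 1) (Subtype.coe_ne_coe.1 hxy' : i ≠ j)]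
  congr 1 with c <;>
    simp only [Function.comp_apply, ← hbi, ← hbj, b.orthonormal.inner_right_fintype]

theorem stdGaussian_real_inter_halfSpace (hE : 2 ≤ Module.finrank ℝ E) {z w : E}
    (hz : ‖z‖ = 1) (hw : ‖w‖ = 1) :
    (stdGaussian E).real ({u | 0 < ⟪z, u⟫} ∩ {u | 0 < ⟪w, u⟫}) =
      (π - arccos ⟪z, w⟫) / (2 * π) := by
  obtain ⟨e, he, hwe⟩ := exists_orthonormal_eq_cos_smul_add_sin_smul hE hz hw
  have hpre : {u | 0 < ⟪z, u⟫} ∩ {u | 0 < ⟪w, u⟫} =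
      (fun u ↦ (⟪z, u⟫, ⟪e, u⟫)) ⁻¹' wedge (arccos ⟪z, w⟫) := by
    ext u
    have hwu : ⟪w, u⟫ = cos (arccos ⟪z, w⟫) * ⟪z, u⟫ + sin (arccos ⟪z, w⟫) * ⟪e, u⟫ := by
      conv_lhs => rw [hwe]
      rw [inner_add_left, real_inner_smul_left, real_inner_smul_left]
    simp only [wedge, mem_inter_iff, mem_preimage, mem_ofPred_eq, hwu]
  rw [hpre, ← map_measureReal_apply (by fun_prop) (measurableSet_wedge _),
    stdGaussian_map_inner_prod he,
    measureReal_gaussianReal_prod_wedge (arccos_nonneg _) (arccos_le_pi _)]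

theorem sum_sum_mul_pi_sub_arccos_inner_nonneg (hE : 2 ≤ Module.finrank ℝ E) {ι : Type*}
    [Fintype ι] (z : ι → E) (hz : ∀ k, ‖z k‖ = 1) (c : ι → ℝ) :
    0 ≤ ∑ k, ∑ l, c k * c l * (π - arccos ⟪z k, z l⟫) := by
  have hH (k : ι) : MeasurableSet {u : E | 0 < ⟪z k, u⟫} :=
    measurableSet_lt measurable_const (by fun_prop)
  let f (k : ι) : Lp ℝ 2 (stdGaussian E) := indicatorConstLp 2 (hH k) (measure_ne_top _ _) 1
  have hf (k l : ι) : π - arccos ⟪z k, z l⟫ = 2 * π * ⟪f k, f l⟫ := by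
    rw [L2.real_inner_indicatorConstLp_one_indicatorConstLp_one,
      stdGaussian_real_inter_halfSpace hE (hz k) (hz l)]
    field_simp
  have h : ∑ k, ∑ l, c k * c l * (π - arccos ⟪z k, z l⟫) =
      2 * π * ∑ k, ∑ l, c k * c l * ⟪f k, f l⟫ := by
    rw [Finset.mul_sum]
    congr 1 with k
    rw [Finset.mul_sum]
    congr 1 with l
    rw [hf]
    ring
  rw [h]
  exact mul_nonneg (by positivity) (sum_sum_mul_inner_nonneg f c)

end InnerProductSpace

lemma EuclideanSpace.inner_toLp_cons_zero {n : ℕ} (x y : EuclideanSpace ℝ (Fin n)) :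
    ⟪WithLp.toLp 2 (Fin.cons 0 x : Fin (n + 1) → ℝ),
      WithLp.toLp 2 (Fin.cons 0 y : Fin (n + 1) → ℝ)⟫ = ⟪x, y⟫ := by
  simp [PiLp.inner_apply, Fin.sum_univ_succ]

/-- `ψ(θ) = π − θ` defines a positive semi-definite kernel on the unit sphere `S^{p-1}`
for every `p ≥ 1`: for unit vectors `z_1,…,z_m` and any `c ∈ ℝ^m`,
`Σ_{k,ℓ} c_k c_ℓ (π − arccos⟪z_k, z_ℓ⟫) ≥ 0`. -/
theorem stmt13 (p : ℕ) (hp : 1 ≤ p) (m : ℕ)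
    (z : Fin m → EuclideanSpace ℝ (Fin p)) (hz : ∀ k, ‖z k‖ = 1)
    (c : Fin m → ℝ) :
    0 ≤ ∑ k, ∑ l, c k * c l * (π - arccos (inner ℝ (z k) (z l) : ℝ)) := by
  let z' (k : Fin m) : EuclideanSpace ℝ (Fin (p + 1)) := WithLp.toLp 2 (Fin.cons 0 (z k))
  have hz' (k : Fin m) : ‖z' k‖ = 1 := by
    rw [norm_eq_sqrt_real_inner, EuclideanSpace.inner_toLp_cons_zero, ← norm_eq_sqrt_real_inner,
      hz k]
  have hdim : 2 ≤ Module.finrank ℝ (EuclideanSpace ℝ (Fin (p + 1))) := by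
    rw [finrank_euclideanSpace_fin]
    omega
  simpa only [z', EuclideanSpace.inner_toLp_cons_zero] using
    sum_sum_mul_pi_sub_arccos_inner_nonneg hdim z' hz' c
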